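/- arXiv:1409.6337 — 2 statements merged into one kernel-verified Lean document; each statement's English description precedes it below -/
import Mathlib

section
/- Fix k, n ≥ 1 and a (n+1)k × (n+1)k positive semidefinite matrix Σ with k×k blocks Σ_{ij}, 0 ≤ i,j ≤ n, such that Σ_{00} is invertible. Let μ₁,...,μ_n ∈ ℝ^k be arbitrary, and let (g₀,g₁,...,g_n) be a random vector in ℝ^{(n+1)k} whose law is Gaussian with mean (0,μ₁,...,μ_n) and covariance Σ. Define h_i = g_i − Σ_{i0}Σ_{00}^{-1} g₀ for i = 1,...,n and h = (h₁,...,h_n) ∈ ℝ^{nk}. Let R : ℝ^k × ℝ^{nk} → ℝ be measurable, α ∈ (0,1), and let c_α(h) = inf{c ∈ ℝ : ν({ξ : R(ξ,h) ≤ c}) ≥ 1 − α}, where ν is the centered Gaussian measure N(0,Σ_{00}) on ℝ^k; assume c_α(h) is finite for every h and measurable in h. Then P{R(g₀,h) > c_α(h)} ≤ α, for every choice of the nuisance means μ₁,...,μ_n. -/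
open MeasureTheory ProbabilityTheory Matrix
open scoped ENNReal Classical

/-- The multivariate Gaussian measure `N(μ, S)` on `ι → ℝ`: the pushforward of a product of
standard one-dimensional Gaussians under `z ↦ μ + √S z`, where `√S` is the positive
semidefinite square root of `S`.  (Junk value `0` if `S` is not positive semidefinite.) -/
noncomputable def multivariateGaussian {ι : Type*} [Fintype ι] [DecidableEq ι]
    (μ : ι → ℝ) (S : Matrix ι ι ℝ) : Measure (ι → ℝ) :=
  if hS : S.PosSemidef then
    (Measure.pi fun _ : ι => gaussianReal 0 1).map (fun z => μ + (hS.1.eigenvectorUnitary.1 *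
      diagonal (((↑) : NNReal → ℝ) ∘ NNReal.sqrt ∘ Real.toNNReal ∘ hS.1.eigenvalues) *
      (star hS.1.eigenvectorUnitary : Matrix ι ι ℝ)).mulVec z)
  else 0

/-!
Write `g₀ = E₀ g` and `h = B g`, where `E₀` selects the block `0` and
`B = E₁ - Σ₁₀ Σ₀₀⁻¹ E₀` is the residual of the regression of the other blocks on `g₀`.
Then `(g₀, h)` is a linear image of the Gaussian vector `g`, hence jointly Gaussian, and
`Cov(g₀, h) = E₀ Σ Bᵀ = 0`, so `g₀` and `h` are independent; moreover `g₀ ∼ N(0, Σ₀₀)` whatever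
the nuisance means are. By independence the rejection probability is the integral over the law of
`h` of `ν {ξ | c_α(h) < R(ξ, h)}`, and each of these is at most `α`: right continuity of
`c ↦ ν {ξ | R(ξ, h) ≤ c}` puts `c_α(h)` itself in the set whose infimum it is.
-/

open WithLp Filter Topology
open scoped MatrixOrder

lemma multivariateGaussian_eq_map_ofLp {ι : Type*} [Fintype ι] [DecidableEq ι] (μ : ι → ℝ)
    {S : Matrix ι ι ℝ} (hS : S.PosSemidef) :
    _root_.multivariateGaussian μ S =
      (ProbabilityTheory.multivariateGaussian (toLp 2 μ) S).map ofLp := by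
  have hsqrt : CFC.sqrt S = hS.1.eigenvectorUnitary.1 *
      diagonal (((↑) : NNReal → ℝ) ∘ NNReal.sqrt ∘ Real.toNNReal ∘ hS.1.eigenvalues) *
      (star hS.1.eigenvectorUnitary : Matrix ι ι ℝ) := by
    rw [CFC.sqrt_eq_cfc, cfc_nnreal_eq_real _ S hS.nonneg, hS.1.cfc_eq]
    -- `Real.sqrt x` is by definition `NNReal.sqrt x.toNNReal`
    rfl
  rw [_root_.multivariateGaussian, dif_pos hS, ProbabilityTheory.multivariateGaussian,
    ← map_pi_eq_stdGaussian, Measure.map_map (by fun_prop) (by fun_prop),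
    Measure.map_map (by fun_prop) (by fun_prop)]
  congr 1
  ext z i
  simp [toEuclideanCLM_toLp, hsqrt, Matrix.mul_assoc]

section MultivariateGaussian

variable {ι : Type*} [Fintype ι] [DecidableEq ι] {μ : ι → ℝ} {S : Matrix ι ι ℝ}

lemma isGaussian_multivariateGaussian_of_posSemidef (hS : S.PosSemidef) :
    IsGaussian (_root_.multivariateGaussian μ S) := by
  rw [multivariateGaussian_eq_map_ofLp μ hS, ← PiLp.coe_continuousLinearEquiv 2 ℝ]
  infer_instance

lemma integral_apply_multivariateGaussian (hS : S.PosSemidef) (i : ι) :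
    ∫ x, x i ∂(_root_.multivariateGaussian μ S) = μ i := by
  rw [multivariateGaussian_eq_map_ofLp μ hS,
    integral_map (f := fun x : ι → ℝ => x i) (by fun_prop)
      (measurable_pi_apply i).aestronglyMeasurable,
    ← EuclideanSpace.coe_proj ℝ]
  exact ((EuclideanSpace.proj (𝕜 := ℝ) i).integral_comp_id_comm
    IsGaussian.integrable_id).trans (by simp)

lemma covariance_apply_multivariateGaussian (hS : S.PosSemidef) (i j : ι) :
    cov[fun x => x i, fun x => x j; _root_.multivariateGaussian μ S] = S i j := by
  rw [multivariateGaussian_eq_map_ofLp μ hS,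
    covariance_map (measurable_pi_apply i).aestronglyMeasurable
      (measurable_pi_apply j).aestronglyMeasurable (by fun_prop)]
  exact covariance_eval_multivariateGaussian hS i j

lemma eq_multivariateGaussian_of_covariance (hS : S.PosSemidef) {ν : Measure (ι → ℝ)}
    [IsGaussian ν] (hmean : ∀ i, ∫ x, x i ∂ν = μ i)
    (hcov : ∀ i j, cov[fun x => x i, fun x => x j; ν] = S i j) :
    ν = _root_.multivariateGaussian μ S := by
  have hν : ν = (ν.map (toLp 2)).map ofLp := by
    rw [Measure.map_map (by fun_prop) (by fun_prop)]
    exact Measure.map_id.symm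
  rw [multivariateGaussian_eq_map_ofLp μ hS, hν]
  congr 1
  have : IsGaussian (ν.map (toLp 2)) := by
    rw [← PiLp.coe_symm_continuousLinearEquiv 2 ℝ]
    infer_instance
  refine IsGaussian.ext ?_ ?_
  · ext i
    have h := (EuclideanSpace.proj (𝕜 := ℝ) i).integral_comp_id_comm
      (μ := ν.map (toLp 2)) IsGaussian.integrable_id
    rw [integral_map (by fun_prop) (by fun_prop)] at h
    simpa [hmean] using h.symm
  · rw [← ContinuousLinearMap.toBilinForm_inj]
    refine LinearMap.BilinForm.ext_basis (EuclideanSpace.basisFun ι ℝ).toBasis fun i j ↦ ?_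
    rw [ContinuousLinearMap.toBilinForm_apply, ContinuousLinearMap.toBilinForm_apply,
      covarianceBilin_apply_eq_cov IsGaussian.memLp_two_id, covarianceBilin_multivariateGaussian hS]
    simp only [OrthonormalBasis.coe_toBasis, EuclideanSpace.basisFun_inner]
    rw [covariance_map (by fun_prop) (by fun_prop) (by fun_prop)]
    simpa [Function.comp_def] using hcov i j

end MultivariateGaussian

section GaussianVector

variable {Ω ι κ κ' : Type*} [MeasurableSpace Ω] [Fintype ι] [DecidableEq ι] {P : Measure Ω}
  {g : Ω → ι → ℝ} {μ : ι → ℝ} {S : Matrix ι ι ℝ}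

lemma ProbabilityTheory.HasLaw.hasGaussianLaw_of_multivariateGaussian
    (hg : HasLaw g (_root_.multivariateGaussian μ S) P) (hS : S.PosSemidef) :
    HasGaussianLaw g P :=
  have := isGaussian_multivariateGaussian_of_posSemidef (μ := μ) hS
  hg.hasGaussianLaw

lemma hasGaussianLaw_mulVec_prodMk [Fintype κ] [Fintype κ']
    (hg : HasLaw g (_root_.multivariateGaussian μ S) P) (hS : S.PosSemidef)
    (A : Matrix κ ι ℝ) (B : Matrix κ' ι ℝ) :
    HasGaussianLaw (fun ω => (A *ᵥ g ω, B *ᵥ g ω)) P :=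
  (hg.hasGaussianLaw_of_multivariateGaussian hS).map
    ((mulVecLin A).prod (mulVecLin B)).toContinuousLinearMap

lemma integral_mulVec_apply (hg : HasLaw g (_root_.multivariateGaussian μ S) P)
    (hS : S.PosSemidef) (A : Matrix κ ι ℝ) (a : κ) :
    ∫ ω, (A *ᵥ g ω) a ∂P = (A *ᵥ μ) a := by
  have hG := hg.hasGaussianLaw_of_multivariateGaussian hS
  have hmean : ∀ i, ∫ ω, g ω i ∂P = μ i := fun i =>
    (hg.integral_comp (measurable_pi_apply i).aestronglyMeasurable).trans
      (integral_apply_multivariateGaussian hS i)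
  simp only [mulVec, dotProduct]
  rw [integral_finsetSum _ fun i _ => (hG.eval i).integrable.const_mul _]
  simp only [integral_const_mul, hmean]

lemma covariance_mulVec_apply (hg : HasLaw g (_root_.multivariateGaussian μ S) P)
    (hS : S.PosSemidef) (A : Matrix κ ι ℝ) (B : Matrix κ' ι ℝ) (a : κ) (b : κ') :
    cov[fun ω => (A *ᵥ g ω) a, fun ω => (B *ᵥ g ω) b; P] = (A * S * Bᵀ) a b := by
  have hG := hg.hasGaussianLaw_of_multivariateGaussian hS
  have := hG.isProbabilityMeasure
  have hL2 : ∀ i, MemLp (fun ω => g ω i) 2 P := fun i => (hG.eval i).memLp_two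
  have hcov : ∀ i j, cov[fun ω => g ω i, fun ω => g ω j; P] = S i j := fun i j => by
    rw [hg.covariance_fun_comp (measurable_pi_apply i).aemeasurable
      (measurable_pi_apply j).aemeasurable, covariance_apply_multivariateGaussian hS]
  simp only [mulVec, dotProduct]
  rw [covariance_fun_sum_fun_sum (fun i => (hL2 i).const_mul _) (fun j => (hL2 j).const_mul _)]
  simp only [covariance_const_mul_left, covariance_const_mul_right, hcov, mul_apply,
    transpose_apply, Finset.sum_mul]
  rw [Finset.sum_comm]
  refine Finset.sum_congr rfl fun j _ => Finset.sum_congr rfl fun i _ => by ring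

lemma indepFun_mulVec_of_mul_mul_transpose_eq_zero [Fintype κ] [Fintype κ']
    (hg : HasLaw g (_root_.multivariateGaussian μ S) P) (hS : S.PosSemidef)
    {A : Matrix κ ι ℝ} {B : Matrix κ' ι ℝ} (hAB : A * S * Bᵀ = 0) :
    IndepFun (fun ω => A *ᵥ g ω) (fun ω => B *ᵥ g ω) P :=
  (hasGaussianLaw_mulVec_prodMk hg hS A B).indepFun_of_covariance_eval fun a b => by
    rw [covariance_mulVec_apply hg hS, hAB, Matrix.zero_apply]

lemma hasLaw_mulVec [Fintype κ] [DecidableEq κ]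
    (hg : HasLaw g (_root_.multivariateGaussian μ S) P) (hS : S.PosSemidef)
    (A : Matrix κ ι ℝ) :
    HasLaw (fun ω => A *ᵥ g ω) (_root_.multivariateGaussian (A *ᵥ μ) (A * S * Aᵀ)) P := by
  have hG := (hasGaussianLaw_mulVec_prodMk hg hS A A).fst
  have := hG.isGaussian_map
  refine ⟨hG.aemeasurable, eq_multivariateGaussian_of_covariance ?_ (fun a => ?_) fun a b => ?_⟩
  · simpa [conjTranspose_eq_transpose_of_trivial] using hS.mul_mul_conjTranspose_same A
  · rw [integral_map hG.aemeasurable (measurable_pi_apply a).aestronglyMeasurable]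
    exact integral_mulVec_apply hg hS A a
  · rw [covariance_map (measurable_pi_apply a).aestronglyMeasurable
      (measurable_pi_apply b).aestronglyMeasurable hG.aemeasurable]
    exact covariance_mulVec_apply hg hS A A a b

end GaussianVector

section Regression

variable {ι κ κ' R : Type*} [Fintype ι] [Fintype κ] [DecidableEq κ] [CommRing R]

lemma mul_mul_transpose_sub_mul_inv_mul_eq_zero {S : Matrix ι ι R} (hS : Sᵀ = S)
    (A : Matrix κ ι R) (C : Matrix κ' ι R) (hA : IsUnit (A * S * Aᵀ).det) :
    A * S * (C - C * S * Aᵀ * (A * S * Aᵀ)⁻¹ * A)ᵀ = 0 := by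
  have hres : (C - C * S * Aᵀ * (A * S * Aᵀ)⁻¹ * A) * S * Aᵀ = 0 := by
    rw [Matrix.sub_mul, Matrix.sub_mul, sub_eq_zero]
    calc C * S * Aᵀ = C * S * Aᵀ * ((A * S * Aᵀ)⁻¹ * (A * S * Aᵀ)) := by
          rw [nonsing_inv_mul _ hA, Matrix.mul_one]
      _ = C * S * Aᵀ * (A * S * Aᵀ)⁻¹ * A * S * Aᵀ := by simp only [Matrix.mul_assoc]
  simpa only [transpose_mul, transpose_transpose, hS, transpose_zero, Matrix.mul_assoc]
    using congrArg transpose hres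

end Regression

section Selection

variable {ι κ κ' R : Type*} [Fintype ι] [DecidableEq ι] [NonAssocSemiring R]

lemma one_submatrix_mulVec (r : κ → ι) (v : ι → R) :
    (1 : Matrix ι ι R).submatrix r id *ᵥ v = v ∘ r := by
  ext a
  simp [mulVec, dotProduct, one_apply]

lemma one_submatrix_mul_mul_transpose_one_submatrix (r : κ → ι) (r' : κ' → ι)
    (S : Matrix ι ι R) :
    (1 : Matrix ι ι R).submatrix r id * S * ((1 : Matrix ι ι R).submatrix r' id)ᵀ =
      S.submatrix r r' := by
  ext a b
  simp [mul_apply, one_apply]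

end Selection

section CriticalValue

variable {X : Type*} [MeasurableSpace X] {ν : Measure X} {f : X → ℝ} {α : ℝ}

noncomputable def criticalValue (ν : Measure X) (f : X → ℝ) (α : ℝ) : ℝ :=
  sInf {c : ℝ | ENNReal.ofReal (1 - α) ≤ ν {x | f x ≤ c}}

lemma ofReal_one_sub_le_measure_le_criticalValue [IsFiniteMeasure ν] (hf : Measurable f)
    (hne : {c : ℝ | ENNReal.ofReal (1 - α) ≤ ν {x | f x ≤ c}}.Nonempty) :
    ENNReal.ofReal (1 - α) ≤ ν {x | f x ≤ criticalValue ν f α} := by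
  set t := criticalValue ν f α
  have hinter : ⋂ r > t, {x | f x ≤ r} = {x | f x ≤ t} := by
    ext x
    simpa using forall_gt_imp_ge_iff_le_of_dense
  have hlim : Tendsto (fun r => ν {x | f x ≤ r}) (𝓝[>] t) (𝓝 (ν {x | f x ≤ t})) := by
    rw [← hinter]
    exact tendsto_measure_biInter_gt
      (fun r _ => (measurableSet_le hf measurable_const).nullMeasurableSet)
      (fun i j _ hij x hx => le_trans hx hij) ⟨t + 1, by linarith, measure_ne_top _ _⟩
  refine ge_of_tendsto hlim (eventually_nhdsWithin_of_forall fun r hr => ?_)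
  obtain ⟨c, hc, hcr⟩ := exists_lt_of_csInf_lt hne hr
  exact hc.trans (measure_mono fun x hx => le_trans hx hcr.le)

lemma measure_criticalValue_lt_le [IsProbabilityMeasure ν] (hf : Measurable f)
    (hne : {c : ℝ | ENNReal.ofReal (1 - α) ≤ ν {x | f x ≤ c}}.Nonempty) :
    ν {x | criticalValue ν f α < f x} ≤ ENNReal.ofReal α := by
  have hcompl : {x | criticalValue ν f α < f x} = {x | f x ≤ criticalValue ν f α}ᶜ := by
    ext x
    simp
  rw [hcompl, prob_compl_eq_one_sub (measurableSet_le hf measurable_const)]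
  calc 1 - ν {x | f x ≤ criticalValue ν f α} ≤ 1 - ENNReal.ofReal (1 - α) :=
        tsub_le_tsub_left (ofReal_one_sub_le_measure_le_criticalValue hf hne) 1
    _ ≤ ENNReal.ofReal α := by
        rw [tsub_le_iff_right, ← ENNReal.ofReal_one]
        calc ENNReal.ofReal 1 = ENNReal.ofReal (α + (1 - α)) := by ring_nf
          _ ≤ ENNReal.ofReal α + ENNReal.ofReal (1 - α) := ENNReal.ofReal_add_le

end CriticalValue

lemma measure_lt_le_of_indepFun {Ω 𝓧 𝓨 : Type*} [MeasurableSpace Ω] [MeasurableSpace 𝓧]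
    [MeasurableSpace 𝓨] {P : Measure Ω} [IsProbabilityMeasure P] {X : Ω → 𝓧} {Y : Ω → 𝓨}
    {ν : Measure 𝓧} (hX : HasLaw X ν P) (hY : AEMeasurable Y P) (hXY : IndepFun X Y P)
    {R : 𝓧 → 𝓨 → ℝ} (hR : Measurable fun p : 𝓧 × 𝓨 => R p.1 p.2) {c : 𝓨 → ℝ}
    (hc : Measurable c) {ε : ℝ≥0∞} (hε : ∀ y, ν {x | c y < R x y} ≤ ε) :
    P {ω | c (Y ω) < R (X ω) (Y ω)} ≤ ε := by
  have := hX.isProbabilityMeasure_iff.1 ‹_›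
  have hXY' := (indepFun_iff_hasLaw_prodMk_prod hX ⟨hY, rfl⟩).1 hXY
  have hE : MeasurableSet {p : 𝓧 × 𝓨 | c p.2 < R p.1 p.2} :=
    measurableSet_lt (hc.comp measurable_snd) hR
  calc P {ω | c (Y ω) < R (X ω) (Y ω)} = (ν.prod (P.map Y)) {p | c p.2 < R p.1 p.2} :=
        hXY'.measure_eq hE
    _ = ∫⁻ y, ν {x | c y < R x y} ∂(P.map Y) := Measure.prod_apply_symm hE
    _ ≤ ∫⁻ _, ε ∂(P.map Y) := lintegral_mono hε
    _ = ε := by simp [Measure.map_apply_of_aemeasurable hY]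

theorem measure_criticalValue_lt_le_of_uncorrelated {Ω ι κ κ' : Type*} [MeasurableSpace Ω]
    [Fintype ι] [DecidableEq ι] [Fintype κ] [DecidableEq κ] [Fintype κ'] {P : Measure Ω}
    [IsProbabilityMeasure P] {g : Ω → ι → ℝ} {μ : ι → ℝ} {S : Matrix ι ι ℝ}
    (hg : HasLaw g (_root_.multivariateGaussian μ S) P) (hS : S.PosSemidef)
    {E₀ : Matrix κ ι ℝ} {B : Matrix κ' ι ℝ} {S₀₀ : Matrix κ κ ℝ} (hS₀₀ : E₀ * S * E₀ᵀ = S₀₀)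
    (hμ : E₀ *ᵥ μ = 0) (hB : E₀ * S * Bᵀ = 0) {R : (κ → ℝ) → (κ' → ℝ) → ℝ}
    (hR : Measurable fun p : (κ → ℝ) × (κ' → ℝ) => R p.1 p.2) {α : ℝ} {c : (κ' → ℝ) → ℝ}
    (hc : ∀ y, c y = criticalValue (_root_.multivariateGaussian 0 S₀₀) (R · y) α)
    (hcm : Measurable c)
    (hne : ∀ y, {c : ℝ | ENNReal.ofReal (1 - α) ≤
      _root_.multivariateGaussian 0 S₀₀ {x | R x y ≤ c}}.Nonempty) :
    P {ω | c (B *ᵥ g ω) < R (E₀ *ᵥ g ω) (B *ᵥ g ω)} ≤ ENNReal.ofReal α := by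
  have hX := hasLaw_mulVec hg hS E₀
  rw [hμ, hS₀₀] at hX
  have := hX.isProbabilityMeasure_iff.1 ‹_›
  refine measure_lt_le_of_indepFun hX (hasGaussianLaw_mulVec_prodMk hg hS E₀ B).snd.aemeasurable
    (indepFun_mulVec_of_mul_mul_transpose_eq_zero hg hS hB) hR hcm fun y => ?_
  rw [hc y]
  exact measure_criticalValue_lt_le (hR.comp (measurable_id.prodMk measurable_const)) (hne y)

theorem stmt_3_general {Ω : Type*} [MeasurableSpace Ω] (P : Measure Ω) [IsProbabilityMeasure P]
    (k n : ℕ)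
    (S : Matrix (Fin (n + 1) × Fin k) (Fin (n + 1) × Fin k) ℝ) (hS : S.PosSemidef)
    (S00 : Matrix (Fin k) (Fin k) ℝ)
    (hS00 : S00 = Matrix.of fun a b => S (0, a) (0, b))
    (hS00unit : IsUnit S00)
    (μ : Fin (n + 1) × Fin k → ℝ) (hμ0 : ∀ a : Fin k, μ (0, a) = 0)
    (g : Ω → Fin (n + 1) × Fin k → ℝ) (hg : Measurable g)
    (hlaw : P.map g = multivariateGaussian μ S)
    (h : Ω → Fin n × Fin k → ℝ)
    (hdef : ∀ (ω : Ω) (i : Fin n) (a : Fin k),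
      h ω (i, a) = g ω (i.succ, a) -
        ((Matrix.of fun a' b' => S (i.succ, a') (0, b')) * S00⁻¹).mulVec
          (fun b => g ω (0, b)) a)
    (R : (Fin k → ℝ) → (Fin n × Fin k → ℝ) → ℝ)
    (hR : Measurable fun p : (Fin k → ℝ) × (Fin n × Fin k → ℝ) => R p.1 p.2)
    (α : ℝ)
    (c : (Fin n × Fin k → ℝ) → ℝ)
    (hc : ∀ hh, c hh = sInf {cc : ℝ |
      ENNReal.ofReal (1 - α) ≤ multivariateGaussian (0 : Fin k → ℝ) S00 {ξ | R ξ hh ≤ cc}})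
    (hfin : ∀ hh,
      {cc : ℝ | ENNReal.ofReal (1 - α) ≤
        multivariateGaussian (0 : Fin k → ℝ) S00 {ξ | R ξ hh ≤ cc}}.Nonempty ∧
      BddBelow {cc : ℝ | ENNReal.ofReal (1 - α) ≤
        multivariateGaussian (0 : Fin k → ℝ) S00 {ξ | R ξ hh ≤ cc}})
    (hcm : Measurable c) :
    P {ω | R (fun a => g ω (0, a)) (h ω) > c (h ω)} ≤ ENNReal.ofReal α := by
  let E₀ := (1 : Matrix (Fin (n + 1) × Fin k) (Fin (n + 1) × Fin k) ℝ).submatrix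
    (fun a : Fin k => (0, a)) id
  let E₁ := (1 : Matrix (Fin (n + 1) × Fin k) (Fin (n + 1) × Fin k) ℝ).submatrix
    (fun p : Fin n × Fin k => (p.1.succ, p.2)) id
  let B := E₁ - E₁ * S * E₀ᵀ * S00⁻¹ * E₀
  have hS00E : E₀ * S * E₀ᵀ = S00 := by
    rw [hS00, one_submatrix_mul_mul_transpose_one_submatrix]
    rfl
  have hX : ∀ ω, (fun a => g ω (0, a)) = E₀ *ᵥ g ω := fun ω => by
    rw [one_submatrix_mulVec]
    rfl
  have hh : ∀ ω, h ω = B *ᵥ g ω := fun ω => by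
    ext ⟨i, a⟩
    rw [hdef]
    simp only [B, E₀, E₁, sub_mulVec, ← mulVec_mulVec, one_submatrix_mulVec,
      one_submatrix_mul_mul_transpose_one_submatrix]
    rfl
  have hμ : E₀ *ᵥ μ = 0 := by
    rw [one_submatrix_mulVec]
    exact funext hμ0
  have hB : E₀ * S * Bᵀ = 0 := by
    have hres := mul_mul_transpose_sub_mul_inv_mul_eq_zero
      ((conjTranspose_eq_transpose_of_trivial S).symm.trans hS.1) E₀ E₁
      (hS00E ▸ (isUnit_iff_isUnit_det _).1 hS00unit)
    rwa [hS00E] at hres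
  simp only [hX, hh, gt_iff_lt]
  exact measure_criticalValue_lt_le_of_uncorrelated ⟨hg.aemeasurable, hlaw⟩ hS hS00E hμ hB hR hc
    hcm fun y => (hfin y).1

/-- **Lemma 1 for a finite parameter space.**  The vector `(g₀,g₁,…,g_n)` in `ℝ^{(n+1)k}`
(indexed by `Fin (n+1) × Fin k`) is Gaussian with mean `(0,μ₁,…,μ_n)` and psd covariance `Σ`
whose upper-left `k×k` block `Σ₀₀` is invertible.  With `h_i = g_i − Σ_{i0}Σ₀₀⁻¹g₀`,
`ν = N(0,Σ₀₀)` and the conditional critical value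
`c_α(h) = inf{c : ν({ξ : R(ξ,h) ≤ c}) ≥ 1−α}` (assumed finite and measurable),
the conditional test has size at most `α` for every value of the nuisance means. -/
theorem stmt_3 {Ω : Type*} [MeasurableSpace Ω] (P : Measure Ω) [IsProbabilityMeasure P]
    (k n : ℕ) (hk : 1 ≤ k) (hn : 1 ≤ n)
    (S : Matrix (Fin (n + 1) × Fin k) (Fin (n + 1) × Fin k) ℝ) (hS : S.PosSemidef)
    (S00 : Matrix (Fin k) (Fin k) ℝ)
    (hS00 : S00 = Matrix.of fun a b => S (0, a) (0, b))
    (hS00unit : IsUnit S00)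
    (μ : Fin (n + 1) × Fin k → ℝ) (hμ0 : ∀ a : Fin k, μ (0, a) = 0)
    (g : Ω → Fin (n + 1) × Fin k → ℝ) (hg : Measurable g)
    (hlaw : P.map g = multivariateGaussian μ S)
    (h : Ω → Fin n × Fin k → ℝ)
    (hdef : ∀ (ω : Ω) (i : Fin n) (a : Fin k),
      h ω (i, a) = g ω (i.succ, a) -
        ((Matrix.of fun a' b' => S (i.succ, a') (0, b')) * S00⁻¹).mulVec
          (fun b => g ω (0, b)) a)
    (R : (Fin k → ℝ) → (Fin n × Fin k → ℝ) → ℝ)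
    (hR : Measurable fun p : (Fin k → ℝ) × (Fin n × Fin k → ℝ) => R p.1 p.2)
    (α : ℝ) (hα : α ∈ Set.Ioo (0 : ℝ) 1)
    (c : (Fin n × Fin k → ℝ) → ℝ)
    (hc : ∀ hh, c hh = sInf {cc : ℝ |
      ENNReal.ofReal (1 - α) ≤ multivariateGaussian (0 : Fin k → ℝ) S00 {ξ | R ξ hh ≤ cc}})
    (hfin : ∀ hh,
      {cc : ℝ | ENNReal.ofReal (1 - α) ≤
        multivariateGaussian (0 : Fin k → ℝ) S00 {ξ | R ξ hh ≤ cc}}.Nonempty ∧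
      BddBelow {cc : ℝ | ENNReal.ofReal (1 - α) ≤
        multivariateGaussian (0 : Fin k → ℝ) S00 {ξ | R ξ hh ≤ cc}})
    (hcm : Measurable c) :
    P {ω | R (fun a => g ω (0, a)) (h ω) > c (h ω)} ≤ ENNReal.ofReal α :=
  stmt_3_general P k n S hS S00 hS00 hS00unit μ hμ0 g hg hlaw h hdef R hR α c hc hfin hcm
end

section
/- Let Θ be a nonempty set with a distinguished point θ₀, let k ≥ 1, λ̄ ≥ 1 and C > 0. Consider triples (ξ, h, Σ) where ξ ∈ ℝ^k, h : Θ → ℝ^k satisfies h(θ₀) = 0, and Σ : Θ×Θ → ℝ^{k×k} is such that Σ(θ,θ) is symmetric with all eigenvalues in [1/λ̄, λ̄] for every θ ∈ Θ and ‖Σ(θ,θ̃)‖_op ≤ λ̄ for all θ,θ̃ ∈ Θ. Define g(θ) = h(θ) + Σ(θ,θ₀)Σ(θ₀,θ₀)^{-1}ξ and R(ξ,h,Σ) = ξ'Σ(θ₀,θ₀)^{-1}ξ − inf_{θ∈Θ} g(θ)'Σ(θ,θ)^{-1}g(θ). Then: (a) for every triple with ξ'Σ(θ₀,θ₀)^{-1}ξ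 ≤ C one has 0 ≤ R(ξ,h,Σ) ≤ C; and (b) there exists a constant K depending only on C, λ̄ and k such that for any two such triples (ξ₁,h₁,Σ₁), (ξ₂,h₂,Σ₂), each with ξ_i'Σ_i(θ₀,θ₀)^{-1}ξ_i ≤ C, |R(ξ₁,h₁,Σ₁) − R(ξ₂,h₂,Σ₂)| ≤ K (‖ξ₁−ξ₂‖ + sup_{θ∈Θ}‖h₁(θ)−h₂(θ)‖ + sup_{θ,θ̃∈Θ}‖Σ₁(θ,θ̃)−Σ₂(θ,θ̃)‖_op). -/
/-!
The eigenvalue bounds make every `Σ(θ,θ)⁻¹` uniformly bounded and uniformly positive definite: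
`‖Σ(θ,θ)⁻¹‖ ≤ λ̄` and `‖x‖² ≤ λ̄³ x'Σ(θ,θ)⁻¹x`. Hence the criterion `θ ↦ g(θ)'Σ(θ,θ)⁻¹g(θ)` is
nonnegative and equals `ξ'Σ(θ₀,θ₀)⁻¹ξ` at `θ₀` (because `h(θ₀) = 0`), which gives `0 ≤ R ≤ C`.

For the Lipschitz bound let `D = ‖ξ₁ - ξ₂‖ + sup‖h₁ - h₂‖ + sup‖Σ₁ - Σ₂‖`. If `D > 1` the bound
`|R₁ - R₂| ≤ C ≤ C D` is trivial. If `D ≤ 1`, the first terms of `R₁, R₂` are quadratic forms in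
bounded data and differ by `O(D)`. For the infima, only near-minimisers `θ` of the first criterion
matter, i.e. `θ` with criterion at most `C + 1`; there `g₁(θ)` is bounded, `g₁` and `g₂` differ by
`O(D)` uniformly in `θ`, hence `g₂(θ)` is bounded too and the two criteria differ by `O(D)`.
-/

open Matrix

/-- Euclidean norm of a vector in `ℝ^k`. -/
noncomputable def euclNorm {k : ℕ} (x : Fin k → ℝ) : ℝ :=
  Real.sqrt (∑ i, x i ^ 2)

/-- Euclidean operator norm of a `k×k` real matrix. -/
noncomputable def opNorm {k : ℕ} (A : Matrix (Fin k) (Fin k) ℝ) : ℝ :=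
  sSup {r : ℝ | ∃ x : Fin k → ℝ, euclNorm x ≤ 1 ∧ r = euclNorm (A.mulVec x)}

/-- Quadratic form `x'Ax`. -/
noncomputable def quadForm {k : ℕ} (A : Matrix (Fin k) (Fin k) ℝ) (x : Fin k → ℝ) : ℝ :=
  x ⬝ᵥ A.mulVec x

/-- The QLR functional `R(ξ,h,Σ) = ξ'Σ(θ₀,θ₀)⁻¹ξ − inf_θ g(θ)'Σ(θ,θ)⁻¹g(θ)` where
`g(θ) = h(θ) + Σ(θ,θ₀)Σ(θ₀,θ₀)⁻¹ξ`. -/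
noncomputable def qlrStat {k : ℕ} {Θ : Type*} (θ₀ : Θ) (ξ : Fin k → ℝ)
    (h : Θ → Fin k → ℝ) (S : Θ → Θ → Matrix (Fin k) (Fin k) ℝ) : ℝ :=
  quadForm (S θ₀ θ₀)⁻¹ ξ -
    ⨅ θ : Θ, quadForm (S θ θ)⁻¹ (h θ + (S θ θ₀ * (S θ₀ θ₀)⁻¹).mulVec ξ)

/-- `Σ(θ,θ)` is symmetric with all eigenvalues in `[1/λ̄, λ̄]` for every `θ`, and all blocks
`Σ(θ,θ̃)` have operator norm at most `λ̄`. -/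
def covOK {k : ℕ} {Θ : Type*} (lam : ℝ) (S : Θ → Θ → Matrix (Fin k) (Fin k) ℝ) : Prop :=
  (∀ θ : Θ, ∃ hH : (S θ θ).IsHermitian, ∀ i, hH.eigenvalues i ∈ Set.Icc (1 / lam) lam) ∧
  (∀ θ θ' : Θ, opNorm (S θ θ') ≤ lam)

lemma ciInf_le_ciInf_add_of_sublevel {ι : Type*} [Nonempty ι] {f g : ι → ℝ} {M δ : ℝ}
    (hg : BddBelow (Set.range g)) (hf : ⨅ i, f i ≤ M) (h : ∀ i, f i ≤ M + 1 → g i ≤ f i + δ) :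
    ⨅ i, g i ≤ (⨅ i, f i) + δ := by
  refine le_of_forall_pos_lt_add fun ε hε => ?_
  obtain ⟨i, hi⟩ := exists_lt_of_ciInf_lt (lt_add_of_pos_right (⨅ i, f i) (lt_min hε one_pos))
  have hgi := h i (by linarith [min_le_right ε 1])
  calc ⨅ i, g i ≤ g i := ciInf_le hg i
    _ < (⨅ i, f i) + δ + ε := by linarith [min_le_left ε 1]

lemma abs_le_mul_of_le_one_imp {x C L D : ℝ} (hL : 0 ≤ L) (hD : 0 ≤ D) (hC : |x| ≤ C)
    (hsmall : D ≤ 1 → |x| ≤ L * D) : |x| ≤ (C + L) * D := by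
  have hC₀ : 0 ≤ C := (abs_nonneg x).trans hC
  rcases le_or_gt D 1 with hD₁ | hD₁
  · nlinarith [hsmall hD₁]
  · nlinarith

open scoped Matrix.Norms.L2Operator

variable {k : ℕ}

lemma euclNorm_eq_norm (x : Fin k → ℝ) :
    euclNorm x = ‖(WithLp.toLp 2 x : EuclideanSpace ℝ (Fin k))‖ := by
  simp [euclNorm, EuclideanSpace.norm_eq]

lemma euclNorm_nonneg (x : Fin k → ℝ) : 0 ≤ euclNorm x := Real.sqrt_nonneg _

lemma euclNorm_add_le (x y : Fin k → ℝ) : euclNorm (x + y) ≤ euclNorm x + euclNorm y := by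
  simpa only [euclNorm_eq_norm, WithLp.toLp_add] using norm_add_le _ _

lemma euclNorm_sub_comm (x y : Fin k → ℝ) : euclNorm (x - y) = euclNorm (y - x) := by
  simpa only [euclNorm_eq_norm, WithLp.toLp_sub] using norm_sub_rev _ _

lemma euclNorm_le_add_euclNorm_sub (x y : Fin k → ℝ) :
    euclNorm y ≤ euclNorm x + euclNorm (x - y) := by
  simpa only [euclNorm_eq_norm, WithLp.toLp_sub] using norm_le_insert _ _

lemma abs_dotProduct_le (x y : Fin k → ℝ) : |x ⬝ᵥ y| ≤ euclNorm x * euclNorm y := by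
  simpa only [euclNorm_eq_norm, EuclideanSpace.inner_toLp_toLp, dotProduct_comm, star_trivial]
    using abs_real_inner_le_norm (WithLp.toLp 2 x) (WithLp.toLp 2 y)

lemma euclNorm_mulVec_le (A : Matrix (Fin k) (Fin k) ℝ) (x : Fin k → ℝ) :
    euclNorm (A *ᵥ x) ≤ ‖A‖ * euclNorm x := by
  rw [euclNorm_eq_norm, euclNorm_eq_norm]
  exact A.l2_opNorm_mulVec _

lemma norm_le_of_euclNorm_mulVec_le {A : Matrix (Fin k) (Fin k) ℝ} {M : ℝ} (hM : 0 ≤ M)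
    (h : ∀ x, euclNorm (A *ᵥ x) ≤ M * euclNorm x) : ‖A‖ ≤ M := by
  rw [← Matrix.l2_opNorm_toEuclideanCLM]
  refine ContinuousLinearMap.opNorm_le_bound _ hM fun x => ?_
  have := h x.ofLp
  rwa [euclNorm_eq_norm, euclNorm_eq_norm, WithLp.toLp_ofLp] at this

lemma opNorm_eq_norm (A : Matrix (Fin k) (Fin k) ℝ) : opNorm A = ‖A‖ := by
  rw [← Matrix.l2_opNorm_toEuclideanCLM, ← ContinuousLinearMap.sSup_unitClosedBall_eq_norm]
  refine congrArg sSup (Set.ext fun r => ?_)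
  simp only [Set.mem_ofPred_eq, Set.mem_image, Metric.mem_closedBall, dist_zero_right]
  constructor
  · rintro ⟨x, hx, rfl⟩
    exact ⟨WithLp.toLp 2 x, by rwa [← euclNorm_eq_norm], by rw [euclNorm_eq_norm]; rfl⟩
  · rintro ⟨y, hy, rfl⟩
    exact ⟨y.ofLp, by rwa [euclNorm_eq_norm], by rw [euclNorm_eq_norm]; rfl⟩

lemma abs_quadForm_le (A : Matrix (Fin k) (Fin k) ℝ) (x : Fin k → ℝ) :
    |quadForm A x| ≤ ‖A‖ * euclNorm x ^ 2 := by
  calc |quadForm A x| ≤ euclNorm x * (‖A‖ * euclNorm x) :=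
        (abs_dotProduct_le _ _).trans
          (mul_le_mul_of_nonneg_left (euclNorm_mulVec_le A x) (euclNorm_nonneg x))
    _ = ‖A‖ * euclNorm x ^ 2 := by ring

lemma abs_quadForm_sub_quadForm_le (A B : Matrix (Fin k) (Fin k) ℝ) (x y : Fin k → ℝ) :
    |quadForm A x - quadForm B y| ≤
      ‖A‖ * (euclNorm x + euclNorm y) * euclNorm (x - y) + ‖A - B‖ * euclNorm y ^ 2 := by
  have hsplit : quadForm A x - quadForm B y =
      x ⬝ᵥ A *ᵥ (x - y) + (x - y) ⬝ᵥ A *ᵥ y + quadForm (A - B) y := by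
    simp only [quadForm, Matrix.mulVec_sub, Matrix.sub_mulVec, dotProduct_sub, sub_dotProduct]
    ring
  have h₁ := (abs_dotProduct_le x (A *ᵥ (x - y))).trans
    (mul_le_mul_of_nonneg_left (euclNorm_mulVec_le A _) (euclNorm_nonneg x))
  have h₂ := (abs_dotProduct_le (x - y) (A *ᵥ y)).trans
    (mul_le_mul_of_nonneg_left (euclNorm_mulVec_le A _) (euclNorm_nonneg _))
  rw [hsplit]
  calc _ ≤ |x ⬝ᵥ A *ᵥ (x - y)| + |(x - y) ⬝ᵥ A *ᵥ y| + |quadForm (A - B) y| := abs_add_three _ _ _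
    _ ≤ _ := by linarith [abs_quadForm_le (A - B) y]

lemma euclNorm_mulVec_sub_mulVec_le (A B : Matrix (Fin k) (Fin k) ℝ) (x y : Fin k → ℝ) :
    euclNorm (A *ᵥ x - B *ᵥ y) ≤ ‖A - B‖ * euclNorm x + ‖B‖ * euclNorm (x - y) := by
  have hsplit : A *ᵥ x - B *ᵥ y = (A - B) *ᵥ x + B *ᵥ (x - y) := by
    rw [Matrix.sub_mulVec, Matrix.mulVec_sub]; abel
  rw [hsplit]
  exact (euclNorm_add_le _ _).trans (add_le_add (euclNorm_mulVec_le _ _) (euclNorm_mulVec_le _ _))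

lemma Matrix.norm_mul_sub_mul_le (A₁ A₂ B₁ B₂ : Matrix (Fin k) (Fin k) ℝ) :
    ‖A₁ * B₁ - A₂ * B₂‖ ≤ ‖A₁ - A₂‖ * ‖B₁‖ + ‖A₂‖ * ‖B₁ - B₂‖ := by
  have hsplit : A₁ * B₁ - A₂ * B₂ = (A₁ - A₂) * B₁ + A₂ * (B₁ - B₂) := by
    rw [Matrix.sub_mul, Matrix.mul_sub]; abel
  rw [hsplit]
  exact (norm_add_le _ _).trans (add_le_add (norm_mul_le _ _) (norm_mul_le _ _))

lemma Matrix.norm_inv_sub_inv_le {A B : Matrix (Fin k) (Fin k) ℝ} (hA : IsUnit A) (hB : IsUnit B) :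
    ‖A⁻¹ - B⁻¹‖ ≤ ‖A⁻¹‖ * ‖A - B‖ * ‖B⁻¹‖ := by
  rw [Matrix.inv_sub_inv (iff_of_true hA hB), norm_sub_rev A B]
  exact (norm_mul_le _ _).trans (mul_le_mul_of_nonneg_right (norm_mul_le _ _) (norm_nonneg _))

lemma quadForm_nonsing_inv {N : Matrix (Fin k) (Fin k) ℝ} (hN : N * N⁻¹ = 1) (x : Fin k → ℝ) :
    quadForm N⁻¹ x = quadForm N (N⁻¹ *ᵥ x) := by
  have hx : N *ᵥ (N⁻¹ *ᵥ x) = x := by rw [mulVec_mulVec, hN, one_mulVec]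
  calc quadForm N⁻¹ x = N *ᵥ (N⁻¹ *ᵥ x) ⬝ᵥ N⁻¹ *ᵥ x := by rw [hx]; rfl
    _ = quadForm N (N⁻¹ *ᵥ x) := dotProduct_comm _ _

namespace Matrix.IsHermitian

variable {N : Matrix (Fin k) (Fin k) ℝ} {c : ℝ}

lemma posSemidef_sub_smul_one (hN : N.IsHermitian) (hc : ∀ i, c ≤ hN.eigenvalues i) :
    (N - c • 1).PosSemidef := by
  have hdiag : N - c • 1 = Unitary.conjStarAlgAut ℝ _ hN.eigenvectorUnitary
      (diagonal fun i => hN.eigenvalues i - c) := by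
    conv_lhs => rw [hN.spectral_theorem]
    rw [← diagonal_sub, ← smul_one_eq_diagonal, map_sub, map_smul, map_one]
    rfl
  rw [hdiag, Unitary.conjStarAlgAut_apply, Unitary.isUnit_coe.posSemidef_star_right_conjugate_iff,
    posSemidef_diagonal_iff]
  exact fun i => sub_nonneg.2 (hc i)

lemma mul_sq_le_quadForm (hN : N.IsHermitian) (hc : ∀ i, c ≤ hN.eigenvalues i)
    (x : Fin k → ℝ) : c * euclNorm x ^ 2 ≤ quadForm N x := by
  have h := (hN.posSemidef_sub_smul_one hc).dotProduct_mulVec_nonneg x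
  rw [star_trivial, sub_mulVec, dotProduct_sub, smul_mulVec, one_mulVec, dotProduct_smul,
    sub_nonneg] at h
  rwa [euclNorm_eq_norm, ← real_inner_self_eq_norm_sq, EuclideanSpace.inner_toLp_toLp,
    star_trivial]

lemma mul_euclNorm_le_euclNorm_mulVec (hN : N.IsHermitian) (hc : ∀ i, c ≤ hN.eigenvalues i)
    (x : Fin k → ℝ) : c * euclNorm x ≤ euclNorm (N *ᵥ x) := by
  have hquad := (hN.mul_sq_le_quadForm hc x).trans (le_abs_self _) |>.trans
    (abs_dotProduct_le x (N *ᵥ x))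
  rcases (euclNorm_nonneg x).eq_or_lt with hx | hx
  · rw [← hx, mul_zero]; exact euclNorm_nonneg _
  · nlinarith

lemma isUnit (hN : N.IsHermitian) (hc₀ : 0 < c) (hc : ∀ i, c ≤ hN.eigenvalues i) : IsUnit N :=
  (hN.posDef_iff_eigenvalues_pos.2 fun i => hc₀.trans_le (hc i)).isUnit

lemma mul_nonsing_inv (hN : N.IsHermitian) (hc₀ : 0 < c) (hc : ∀ i, c ≤ hN.eigenvalues i) :
    N * N⁻¹ = 1 :=
  Matrix.mul_nonsing_inv N ((isUnit_iff_isUnit_det N).1 (hN.isUnit hc₀ hc))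

lemma norm_inv_le (hN : N.IsHermitian) (hc₀ : 0 < c) (hc : ∀ i, c ≤ hN.eigenvalues i) :
    ‖N⁻¹‖ ≤ c⁻¹ := by
  have hNN := hN.mul_nonsing_inv hc₀ hc
  refine norm_le_of_euclNorm_mulVec_le (inv_nonneg.2 hc₀.le) fun x => ?_
  have := hN.mul_euclNorm_le_euclNorm_mulVec hc (N⁻¹ *ᵥ x)
  rw [mulVec_mulVec, hNN, one_mulVec] at this
  rw [le_inv_mul_iff₀ hc₀]
  linarith

lemma mul_sq_le_quadForm_inv (hN : N.IsHermitian) (hc₀ : 0 < c)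
    (hc : ∀ i, c ≤ hN.eigenvalues i) (x : Fin k → ℝ) :
    c * euclNorm x ^ 2 ≤ ‖N‖ ^ 2 * quadForm N⁻¹ x := by
  have hNN := hN.mul_nonsing_inv hc₀ hc
  have hx : N *ᵥ (N⁻¹ *ᵥ x) = x := by rw [mulVec_mulVec, hNN, one_mulVec]
  have hxy : euclNorm x ^ 2 ≤ ‖N‖ ^ 2 * euclNorm (N⁻¹ *ᵥ x) ^ 2 := by
    have h := euclNorm_mulVec_le N (N⁻¹ *ᵥ x)
    rw [hx] at h
    rw [← mul_pow]
    exact pow_le_pow_left₀ (euclNorm_nonneg x) h 2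
  rw [quadForm_nonsing_inv hNN]
  nlinarith [hN.mul_sq_le_quadForm hc (N⁻¹ *ᵥ x), sq_nonneg ‖N‖]

end Matrix.IsHermitian

section QLR

variable {Θ : Type*} {lam : ℝ} {S S₁ S₂ : Θ → Θ → Matrix (Fin k) (Fin k) ℝ}

namespace covOK

lemma norm_le (hS : covOK lam S) (θ θ' : Θ) : ‖S θ θ'‖ ≤ lam :=
  opNorm_eq_norm (S θ θ') ▸ hS.2 θ θ'

lemma isUnit (hS : covOK lam S) (hlam : 0 < lam) (θ : Θ) : IsUnit (S θ θ) := by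
  obtain ⟨hH, he⟩ := hS.1 θ
  exact hH.isUnit (one_div_pos.2 hlam) fun i => (he i).1

lemma mul_inv (hS : covOK lam S) (hlam : 0 < lam) (θ : Θ) : S θ θ * (S θ θ)⁻¹ = 1 := by
  obtain ⟨hH, he⟩ := hS.1 θ
  exact hH.mul_nonsing_inv (one_div_pos.2 hlam) fun i => (he i).1

lemma norm_inv_le (hS : covOK lam S) (hlam : 0 < lam) (θ : Θ) : ‖(S θ θ)⁻¹‖ ≤ lam := by
  obtain ⟨hH, he⟩ := hS.1 θ
  simpa using hH.norm_inv_le (one_div_pos.2 hlam) fun i => (he i).1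

lemma quadForm_inv_nonneg (hS : covOK lam S) (hlam : 0 < lam) (θ : Θ) (x : Fin k → ℝ) :
    0 ≤ quadForm (S θ θ)⁻¹ x := by
  obtain ⟨hH, he⟩ := hS.1 θ
  rw [quadForm_nonsing_inv (hS.mul_inv hlam θ)]
  exact le_trans (by positivity) (hH.mul_sq_le_quadForm (fun i => (he i).1) _)

lemma sq_le_quadForm_inv (hS : covOK lam S) (hlam : 0 < lam) (θ : Θ) (x : Fin k → ℝ) :
    euclNorm x ^ 2 ≤ lam ^ 3 * quadForm (S θ θ)⁻¹ x := by
  obtain ⟨hH, he⟩ := hS.1 θ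
  have h := hH.mul_sq_le_quadForm_inv (one_div_pos.2 hlam) (fun i => (he i).1) x
  have hN : ‖S θ θ‖ ^ 2 ≤ lam ^ 2 := pow_le_pow_left₀ (norm_nonneg _) (hS.norm_le θ θ) 2
  have hq := hS.quadForm_inv_nonneg hlam θ x
  rw [one_div, inv_mul_le_iff₀ hlam] at h
  nlinarith [mul_le_mul_of_nonneg_left (mul_le_mul_of_nonneg_right hN hq) hlam.le]

lemma euclNorm_le_of_quadForm_inv_le (hS : covOK lam S) (hlam : 0 < lam) (θ : Θ)
    {x : Fin k → ℝ} {a G : ℝ} (hx : quadForm (S θ θ)⁻¹ x ≤ a) (hG₀ : 0 ≤ G)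
    (hG : lam ^ 3 * a ≤ G ^ 2) : euclNorm x ≤ G :=
  le_of_pow_le_pow_left₀ two_ne_zero hG₀ <| (hS.sq_le_quadForm_inv hlam θ x).trans <|
    (mul_le_mul_of_nonneg_left hx (by positivity)).trans hG

lemma norm_inv_sub_inv_le (hS₁ : covOK lam S₁) (hS₂ : covOK lam S₂) (hlam : 0 < lam) (θ : Θ) :
    ‖(S₁ θ θ)⁻¹ - (S₂ θ θ)⁻¹‖ ≤ lam ^ 2 * ‖S₁ θ θ - S₂ θ θ‖ := by
  calc _ ≤ ‖(S₁ θ θ)⁻¹‖ * ‖S₁ θ θ - S₂ θ θ‖ * ‖(S₂ θ θ)⁻¹‖ :=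
        Matrix.norm_inv_sub_inv_le (hS₁.isUnit hlam θ) (hS₂.isUnit hlam θ)
    _ ≤ lam * ‖S₁ θ θ - S₂ θ θ‖ * lam := by
        gcongr
        exacts [hS₁.norm_inv_le hlam θ, hS₂.norm_inv_le hlam θ]
    _ = lam ^ 2 * ‖S₁ θ θ - S₂ θ θ‖ := by ring

lemma abs_quadForm_inv_sub_le (hS₁ : covOK lam S₁) (hS₂ : covOK lam S₂) (hlam : 0 < lam)
    {DS G : ℝ} (hDS : ∀ θ θ', ‖S₁ θ θ' - S₂ θ θ'‖ ≤ DS) (θ : Θ) {x y : Fin k → ℝ}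
    (hx : euclNorm x ≤ G) (hy : euclNorm y ≤ G) :
    |quadForm (S₁ θ θ)⁻¹ x - quadForm (S₂ θ θ)⁻¹ y| ≤
      2 * lam * G * euclNorm (x - y) + lam ^ 2 * G ^ 2 * DS := by
  refine (abs_quadForm_sub_quadForm_le _ _ x y).trans ?_
  have hinv := (hS₁.norm_inv_sub_inv_le hS₂ hlam θ).trans
    (mul_le_mul_of_nonneg_left (hDS θ θ) (sq_nonneg lam))
  have hy2 : euclNorm y ^ 2 ≤ G ^ 2 := pow_le_pow_left₀ (euclNorm_nonneg y) hy 2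
  have hsum : euclNorm x + euclNorm y ≤ 2 * G := by linarith
  have hG : 0 ≤ G := (euclNorm_nonneg x).trans hx
  calc _ ≤ lam * (2 * G) * euclNorm (x - y) + lam ^ 2 * DS * G ^ 2 :=
        add_le_add
          (mul_le_mul_of_nonneg_right (mul_le_mul (hS₁.norm_inv_le hlam θ) hsum
            (add_nonneg (euclNorm_nonneg x) (euclNorm_nonneg y)) hlam.le) (euclNorm_nonneg _))
          (mul_le_mul hinv hy2 (sq_nonneg _) ((norm_nonneg _).trans hinv))
    _ = _ := by ring

end covOK

noncomputable def qlrProcess (θ₀ : Θ) (ξ : Fin k → ℝ) (h : Θ → Fin k → ℝ)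
    (S : Θ → Θ → Matrix (Fin k) (Fin k) ℝ) (θ : Θ) : Fin k → ℝ :=
  h θ + (S θ θ₀ * (S θ₀ θ₀)⁻¹) *ᵥ ξ

noncomputable def qlrCriterion (θ₀ : Θ) (ξ : Fin k → ℝ) (h : Θ → Fin k → ℝ)
    (S : Θ → Θ → Matrix (Fin k) (Fin k) ℝ) (θ : Θ) : ℝ :=
  quadForm (S θ θ)⁻¹ (qlrProcess θ₀ ξ h S θ)

variable {θ₀ : Θ} {ξ : Fin k → ℝ} {h : Θ → Fin k → ℝ}

lemma qlrStat_eq_sub_iInf :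
    qlrStat θ₀ ξ h S = quadForm (S θ₀ θ₀)⁻¹ ξ - ⨅ θ, qlrCriterion θ₀ ξ h S θ :=
  rfl

lemma qlrCriterion_nonneg (hS : covOK lam S) (hlam : 0 < lam) (θ : Θ) :
    0 ≤ qlrCriterion θ₀ ξ h S θ :=
  hS.quadForm_inv_nonneg hlam θ _

lemma qlrCriterion_self (hS : covOK lam S) (hlam : 0 < lam) (hz : h θ₀ = 0) :
    qlrCriterion θ₀ ξ h S θ₀ = quadForm (S θ₀ θ₀)⁻¹ ξ := by
  rw [qlrCriterion, qlrProcess, hz, zero_add, hS.mul_inv hlam θ₀, one_mulVec]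

lemma bddBelow_qlrCriterion (hS : covOK lam S) (hlam : 0 < lam) :
    BddBelow (Set.range (qlrCriterion θ₀ ξ h S)) :=
  ⟨0, Set.forall_mem_range.2 (qlrCriterion_nonneg hS hlam)⟩

lemma iInf_qlrCriterion_le (hS : covOK lam S) (hlam : 0 < lam) (hz : h θ₀ = 0) :
    ⨅ θ, qlrCriterion θ₀ ξ h S θ ≤ quadForm (S θ₀ θ₀)⁻¹ ξ :=
  (ciInf_le (bddBelow_qlrCriterion hS hlam) θ₀).trans_eq (qlrCriterion_self hS hlam hz)

lemma qlrStat_mem_Icc (hS : covOK lam S) (hlam : 0 < lam) (hz : h θ₀ = 0) :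
    qlrStat θ₀ ξ h S ∈ Set.Icc 0 (quadForm (S θ₀ θ₀)⁻¹ ξ) := by
  rw [qlrStat_eq_sub_iInf]
  exact ⟨sub_nonneg.2 (iInf_qlrCriterion_le hS hlam hz),
    sub_le_self _ (Real.iInf_nonneg (qlrCriterion_nonneg hS hlam))⟩

variable {ξ₁ ξ₂ : Fin k → ℝ} {h₁ h₂ : Θ → Fin k → ℝ} {Dh DS : ℝ}

lemma euclNorm_qlrProcess_sub_le (hS₁ : covOK lam S₁) (hS₂ : covOK lam S₂) (hlam : 0 < lam)
    (hDh : ∀ θ, euclNorm (h₁ θ - h₂ θ) ≤ Dh) (hDS : ∀ θ θ', ‖S₁ θ θ' - S₂ θ θ'‖ ≤ DS)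
    (θ : Θ) :
    euclNorm (qlrProcess θ₀ ξ₁ h₁ S₁ θ - qlrProcess θ₀ ξ₂ h₂ S₂ θ) ≤
      Dh + (lam + lam ^ 3) * DS * euclNorm ξ₁ + lam ^ 2 * euclNorm (ξ₁ - ξ₂) := by
  have hDS₀ : 0 ≤ DS := (norm_nonneg _).trans (hDS θ θ)
  have hM : ‖S₁ θ θ₀ * (S₁ θ₀ θ₀)⁻¹ - S₂ θ θ₀ * (S₂ θ₀ θ₀)⁻¹‖ ≤ (lam + lam ^ 3) * DS :=
    calc _ ≤ ‖S₁ θ θ₀ - S₂ θ θ₀‖ * ‖(S₁ θ₀ θ₀)⁻¹‖ +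
          ‖S₂ θ θ₀‖ * ‖(S₁ θ₀ θ₀)⁻¹ - (S₂ θ₀ θ₀)⁻¹‖ := Matrix.norm_mul_sub_mul_le _ _ _ _
      _ ≤ DS * lam + lam * (lam ^ 2 * DS) := by
          gcongr
          exacts [hDS θ θ₀, hS₁.norm_inv_le hlam θ₀, hS₂.norm_le θ θ₀,
            (hS₁.norm_inv_sub_inv_le hS₂ hlam θ₀).trans
              (mul_le_mul_of_nonneg_left (hDS θ₀ θ₀) (sq_nonneg lam))]
      _ = (lam + lam ^ 3) * DS := by ring
  have hM₂ : ‖S₂ θ θ₀ * (S₂ θ₀ θ₀)⁻¹‖ ≤ lam ^ 2 :=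
    (norm_mul_le _ _).trans ((mul_le_mul (hS₂.norm_le θ θ₀) (hS₂.norm_inv_le hlam θ₀)
      (norm_nonneg _) hlam.le).trans_eq (sq lam).symm)
  have hsplit : qlrProcess θ₀ ξ₁ h₁ S₁ θ - qlrProcess θ₀ ξ₂ h₂ S₂ θ = (h₁ θ - h₂ θ) +
      ((S₁ θ θ₀ * (S₁ θ₀ θ₀)⁻¹) *ᵥ ξ₁ - (S₂ θ θ₀ * (S₂ θ₀ θ₀)⁻¹) *ᵥ ξ₂) := by
    simp only [qlrProcess]; abel
  rw [hsplit]
  refine (euclNorm_add_le _ _).trans ?_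
  calc _ ≤ Dh + (‖S₁ θ θ₀ * (S₁ θ₀ θ₀)⁻¹ - S₂ θ θ₀ * (S₂ θ₀ θ₀)⁻¹‖ * euclNorm ξ₁ +
        ‖S₂ θ θ₀ * (S₂ θ₀ θ₀)⁻¹‖ * euclNorm (ξ₁ - ξ₂)) :=
        add_le_add (hDh θ) (euclNorm_mulVec_sub_mulVec_le _ _ _ _)
    _ ≤ Dh + ((lam + lam ^ 3) * DS * euclNorm ξ₁ + lam ^ 2 * euclNorm (ξ₁ - ξ₂)) := by
        gcongr <;> exact euclNorm_nonneg _
    _ = _ := by ring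

lemma qlrCriterion_le_add (hS₁ : covOK lam S₁) (hS₂ : covOK lam S₂) (hlam : 0 < lam)
    (hDh : ∀ θ, euclNorm (h₁ θ - h₂ θ) ≤ Dh) (hDS : ∀ θ θ', ‖S₁ θ θ' - S₂ θ θ'‖ ≤ DS)
    (hD : euclNorm (ξ₁ - ξ₂) + Dh + DS ≤ 1) {G c : ℝ} (hξ₁ : euclNorm ξ₁ ≤ G)
    (hc : 1 + lam ^ 2 + (lam + lam ^ 3) * G ≤ c) {θ : Θ}
    (hθ : euclNorm (qlrProcess θ₀ ξ₁ h₁ S₁ θ) ≤ G) :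
    qlrCriterion θ₀ ξ₂ h₂ S₂ θ ≤ qlrCriterion θ₀ ξ₁ h₁ S₁ θ +
      (2 * lam * (G + c) * c + lam ^ 2 * (G + c) ^ 2) * (euclNorm (ξ₁ - ξ₂) + Dh + DS) := by
  set D := euclNorm (ξ₁ - ξ₂) + Dh + DS
  have hDh₀ : 0 ≤ Dh := (euclNorm_nonneg _).trans (hDh θ)
  have hDS₀ : 0 ≤ DS := (norm_nonneg _).trans (hDS θ θ)
  have hDx₀ := euclNorm_nonneg (ξ₁ - ξ₂)
  have hG₀ : 0 ≤ G := (euclNorm_nonneg _).trans hξ₁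
  have hdiff : euclNorm (qlrProcess θ₀ ξ₁ h₁ S₁ θ - qlrProcess θ₀ ξ₂ h₂ S₂ θ) ≤ c * D := by
    refine (euclNorm_qlrProcess_sub_le hS₁ hS₂ hlam hDh hDS θ).trans ?_
    have hcG : 0 ≤ (lam + lam ^ 3) * G := by positivity
    have hξc : (lam + lam ^ 3) * euclNorm ξ₁ ≤ c :=
      (mul_le_mul_of_nonneg_left hξ₁ (by positivity)).trans (by linarith [sq_nonneg lam])
    nlinarith [mul_le_mul_of_nonneg_right hξc hDS₀,
      mul_le_mul_of_nonneg_right (by linarith [sq_nonneg lam] : 1 ≤ c) hDh₀,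
      mul_le_mul_of_nonneg_right (by linarith : lam ^ 2 ≤ c) hDx₀]
  have hc₀ : 0 ≤ c := le_trans (by positivity) hc
  have h₂θ : euclNorm (qlrProcess θ₀ ξ₂ h₂ S₂ θ) ≤ G + c :=
    (euclNorm_le_add_euclNorm_sub _ _).trans (add_le_add hθ (hdiff.trans (by nlinarith)))
  have hquad := hS₁.abs_quadForm_inv_sub_le hS₂ hlam hDS θ
    (hθ.trans (le_add_of_nonneg_right hc₀)) h₂θ
  rw [abs_le] at hquad
  unfold qlrCriterion
  nlinarith [mul_le_mul_of_nonneg_left hdiff (by positivity : (0 : ℝ) ≤ 2 * lam * (G + c)),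
    mul_le_mul_of_nonneg_left (le_add_of_nonneg_left (add_nonneg hDx₀ hDh₀) : DS ≤ D)
      (by positivity : (0 : ℝ) ≤ lam ^ 2 * (G + c) ^ 2)]

lemma iInf_qlrCriterion_le_add (hS₁ : covOK lam S₁) (hS₂ : covOK lam S₂) (hlam : 0 < lam)
    (hz₁ : h₁ θ₀ = 0) {C : ℝ} (hq₁ : quadForm (S₁ θ₀ θ₀)⁻¹ ξ₁ ≤ C)
    (hDh : ∀ θ, euclNorm (h₁ θ - h₂ θ) ≤ Dh) (hDS : ∀ θ θ', ‖S₁ θ θ' - S₂ θ θ'‖ ≤ DS)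
    (hD : euclNorm (ξ₁ - ξ₂) + Dh + DS ≤ 1) {G c : ℝ} (hG₀ : 0 ≤ G)
    (hG : lam ^ 3 * (C + 1) ≤ G ^ 2) (hc : 1 + lam ^ 2 + (lam + lam ^ 3) * G ≤ c) :
    ⨅ θ, qlrCriterion θ₀ ξ₂ h₂ S₂ θ ≤ (⨅ θ, qlrCriterion θ₀ ξ₁ h₁ S₁ θ) +
      (2 * lam * (G + c) * c + lam ^ 2 * (G + c) ^ 2) * (euclNorm (ξ₁ - ξ₂) + Dh + DS) := by
  have : Nonempty Θ := ⟨θ₀⟩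
  have hξ₁ : euclNorm ξ₁ ≤ G :=
    hS₁.euclNorm_le_of_quadForm_inv_le hlam θ₀ (hq₁.trans (le_add_of_nonneg_right zero_le_one))
      hG₀ hG
  refine ciInf_le_ciInf_add_of_sublevel (bddBelow_qlrCriterion hS₂ hlam)
    ((iInf_qlrCriterion_le hS₁ hlam hz₁).trans hq₁) fun θ hθ => ?_
  exact qlrCriterion_le_add hS₁ hS₂ hlam hDh hDS hD hξ₁ hc
    (hS₁.euclNorm_le_of_quadForm_inv_le hlam θ hθ hG₀ hG)

lemma abs_qlrStat_sub_le (hS₁ : covOK lam S₁) (hS₂ : covOK lam S₂) (hlam : 0 < lam)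
    (hz₁ : h₁ θ₀ = 0) (hz₂ : h₂ θ₀ = 0) {C : ℝ} (hq₁ : quadForm (S₁ θ₀ θ₀)⁻¹ ξ₁ ≤ C)
    (hq₂ : quadForm (S₂ θ₀ θ₀)⁻¹ ξ₂ ≤ C)
    (hDh : ∀ θ, euclNorm (h₁ θ - h₂ θ) ≤ Dh) (hDS : ∀ θ θ', ‖S₁ θ θ' - S₂ θ θ'‖ ≤ DS)
    (hD : euclNorm (ξ₁ - ξ₂) + Dh + DS ≤ 1) {G c : ℝ} (hG₀ : 0 ≤ G)
    (hG : lam ^ 3 * (C + 1) ≤ G ^ 2) (hc : 1 + lam ^ 2 + (lam + lam ^ 3) * G ≤ c) :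
    |qlrStat θ₀ ξ₁ h₁ S₁ - qlrStat θ₀ ξ₂ h₂ S₂| ≤
      (2 * lam * G + lam ^ 2 * G ^ 2 + (2 * lam * (G + c) * c + lam ^ 2 * (G + c) ^ 2)) *
        (euclNorm (ξ₁ - ξ₂) + Dh + DS) := by
  have hGC : lam ^ 3 * C ≤ G ^ 2 := le_trans (by nlinarith) hG
  have hξ₁ := hS₁.euclNorm_le_of_quadForm_inv_le hlam θ₀ hq₁ hG₀ hGC
  have hξ₂ := hS₂.euclNorm_le_of_quadForm_inv_le hlam θ₀ hq₂ hG₀ hGC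
  have htop := abs_le.1 (hS₁.abs_quadForm_inv_sub_le hS₂ hlam hDS θ₀ hξ₁ hξ₂)
  have hinf₁ := iInf_qlrCriterion_le_add hS₁ hS₂ hlam hz₁ hq₁ hDh hDS hD hG₀ hG hc
  have hinf₂ := iInf_qlrCriterion_le_add hS₂ hS₁ hlam hz₂ hq₂
    (fun θ => euclNorm_sub_comm (h₁ θ) (h₂ θ) ▸ hDh θ)
    (fun θ θ' => norm_sub_rev (S₁ θ θ') (S₂ θ θ') ▸ hDS θ θ')
    (euclNorm_sub_comm ξ₁ ξ₂ ▸ hD) hG₀ hG hc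
  rw [euclNorm_sub_comm ξ₂ ξ₁] at hinf₂
  set D := euclNorm (ξ₁ - ξ₂) + Dh + DS
  have hDh₀ : 0 ≤ Dh := (euclNorm_nonneg _).trans (hDh θ₀)
  have hDS₀ : 0 ≤ DS := (norm_nonneg _).trans (hDS θ₀ θ₀)
  have hDxD : euclNorm (ξ₁ - ξ₂) ≤ D := by linarith
  have hDSD : DS ≤ D := by linarith [euclNorm_nonneg (ξ₁ - ξ₂)]
  rw [qlrStat_eq_sub_iInf, qlrStat_eq_sub_iInf, abs_le]
  constructor <;>
  nlinarith [mul_le_mul_of_nonneg_left hDxD (by positivity : (0 : ℝ) ≤ 2 * lam * G),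
    mul_le_mul_of_nonneg_left hDSD (by positivity : (0 : ℝ) ≤ lam ^ 2 * G ^ 2)]

end QLR

theorem stmt_5_general (k : ℕ) (lam C : ℝ) (hlam : 1 ≤ lam) :
    ∃ K : ℝ, ∀ (Θ : Type) [Nonempty Θ], ∀ (θ₀ : Θ)
      (ξ₁ ξ₂ : Fin k → ℝ) (h₁ h₂ : Θ → Fin k → ℝ)
      (S₁ S₂ : Θ → Θ → Matrix (Fin k) (Fin k) ℝ),
      h₁ θ₀ = 0 → h₂ θ₀ = 0 → covOK lam S₁ → covOK lam S₂ →
      quadForm (S₁ θ₀ θ₀)⁻¹ ξ₁ ≤ C → quadForm (S₂ θ₀ θ₀)⁻¹ ξ₂ ≤ C →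
      (0 ≤ qlrStat θ₀ ξ₁ h₁ S₁ ∧ qlrStat θ₀ ξ₁ h₁ S₁ ≤ C) ∧
      (∀ Dh DS : ℝ, (∀ θ, euclNorm (h₁ θ - h₂ θ) ≤ Dh) →
        (∀ θ θ', opNorm (S₁ θ θ' - S₂ θ θ') ≤ DS) →
        |qlrStat θ₀ ξ₁ h₁ S₁ - qlrStat θ₀ ξ₂ h₂ S₂| ≤
          K * (euclNorm (ξ₁ - ξ₂) + Dh + DS)) := by
  have hlam₀ : 0 < lam := zero_lt_one.trans_le hlam
  -- `G` bounds `ξᵢ`, and `g₁(θ)` wherever the first criterion is at most `C + 1`; `c` bounds the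
  -- Lipschitz constant of `(ξ, h, Σ) ↦ g(θ)`.
  set G := √(lam ^ 3 * (C + 1))
  set c := 1 + lam ^ 2 + (lam + lam ^ 3) * G
  have hG₀ : 0 ≤ G := Real.sqrt_nonneg _
  refine ⟨C + (2 * lam * G + lam ^ 2 * G ^ 2 + (2 * lam * (G + c) * c + lam ^ 2 * (G + c) ^ 2)),
    fun Θ _ θ₀ ξ₁ ξ₂ h₁ h₂ S₁ S₂ hz₁ hz₂ hS₁ hS₂ hq₁ hq₂ => ?_⟩
  have hR₁ := qlrStat_mem_Icc (ξ := ξ₁) hS₁ hlam₀ hz₁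
  have hR₂ := qlrStat_mem_Icc (ξ := ξ₂) hS₂ hlam₀ hz₂
  have hC₀ : 0 ≤ C := hR₁.1.trans (hR₁.2.trans hq₁)
  refine ⟨⟨hR₁.1, hR₁.2.trans hq₁⟩, fun Dh DS hDh hDS => ?_⟩
  simp only [opNorm_eq_norm] at hDS
  refine abs_le_mul_of_le_one_imp (by positivity)
    (add_nonneg (add_nonneg (euclNorm_nonneg _) ((euclNorm_nonneg _).trans (hDh θ₀)))
      ((norm_nonneg _).trans (hDS θ₀ θ₀)))
    (abs_sub_le_of_nonneg_of_le hR₁.1 (hR₁.2.trans hq₁) hR₂.1 (hR₂.2.trans hq₂))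
    fun hD => abs_qlrStat_sub_le hS₁ hS₂ hlam₀ hz₁ hz₂ hq₁ hq₂ hDh hDS hD hG₀
      (Real.sq_sqrt (by positivity)).ge le_rfl

/-- **Lemma 2: the QLR functional is bounded and Lipschitz.**  On the set of triples
`(ξ,h,Σ)` with `h(θ₀) = 0`, eigenvalues of `Σ(θ,θ)` in `[1/λ̄,λ̄]`, `‖Σ(θ,θ̃)‖_op ≤ λ̄`, and
`ξ'Σ(θ₀,θ₀)⁻¹ξ ≤ C`: (a) `0 ≤ R(ξ,h,Σ) ≤ C`; (b) there is a constant `K = K(C,λ̄,k)` such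
that `|R(ξ₁,h₁,Σ₁) − R(ξ₂,h₂,Σ₂)| ≤ K(‖ξ₁−ξ₂‖ + sup_θ‖h₁(θ)−h₂(θ)‖ + sup‖Σ₁−Σ₂‖_op)`. -/
theorem stmt_5 (k : ℕ) (hk : 1 ≤ k) (lam C : ℝ) (hlam : 1 ≤ lam) (hC : 0 < C) :
    ∃ K : ℝ, ∀ (Θ : Type) [Nonempty Θ], ∀ (θ₀ : Θ)
      (ξ₁ ξ₂ : Fin k → ℝ) (h₁ h₂ : Θ → Fin k → ℝ)
      (S₁ S₂ : Θ → Θ → Matrix (Fin k) (Fin k) ℝ),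
      h₁ θ₀ = 0 → h₂ θ₀ = 0 → covOK lam S₁ → covOK lam S₂ →
      quadForm (S₁ θ₀ θ₀)⁻¹ ξ₁ ≤ C → quadForm (S₂ θ₀ θ₀)⁻¹ ξ₂ ≤ C →
      (0 ≤ qlrStat θ₀ ξ₁ h₁ S₁ ∧ qlrStat θ₀ ξ₁ h₁ S₁ ≤ C) ∧
      (∀ Dh DS : ℝ, (∀ θ, euclNorm (h₁ θ - h₂ θ) ≤ Dh) →
        (∀ θ θ', opNorm (S₁ θ θ' - S₂ θ θ') ≤ DS) →
        |qlrStat θ₀ ξ₁ h₁ S₁ - qlrStat θ₀ ξ₂ h₂ S₂| ≤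
          K * (euclNorm (ξ₁ - ξ₂) + Dh + DS)) :=
  stmt_5_general k lam C hlam
end
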